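/- arXiv:2308.14092 — 3 statements merged into one kernel-verified Lean document; each statement's English description precedes it below -/
import Mathlib

section
/- Let R and Q be probability measures on a measurable space X with Q absolutely continuous with respect to R, and let C : X → ℝ be a bounded measurable cost function, λ > 0. Then the free energy satisfies the Gibbs variational inequality: -λ * log(∫ exp(-C(x)/λ) dR(x)) ≤ ∫ C(x) dQ(x) + λ * D(Q‖R), where D(Q‖R) = ∫ log(dQ/dR) dQ is the KL divergence. -/
open MeasureTheory Real

/-- KL divergence as integral of the log Radon–Nikodym derivative under `Q`. -/
noncomputable def klDiv {X : Type*} [MeasurableSpace X] (Q R : Measure X) : ℝ :=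
  ∫ x, Real.log ((Q.rnDeriv R x).toReal) ∂Q

/-- Gibbs variational inequality (free energy lower bound). -/
theorem gibbs_variational_inequality {X : Type*} [MeasurableSpace X]
    (R Q : Measure X) [IsProbabilityMeasure R] [IsProbabilityMeasure Q]
    (hQR : Q ≪ R) (C : X → ℝ) (hCmeas : Measurable C)
    (M : ℝ) (hCbdd : ∀ x, |C x| ≤ M)
    (l : ℝ) (hl : 0 < l)
    (hKL : Integrable (fun x => Real.log ((Q.rnDeriv R x).toReal)) Q) :
    -l * Real.log (∫ x, Real.exp (-C x / l) ∂(R)) ≤ (∫ x, C x ∂Q) + l * klDiv Q R := by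
  set f : X → ℝ := fun x => -C x / l with hf_def
  set g : X → ℝ := fun x => (Q.rnDeriv R x).toReal with hg_def
  set Z : ℝ := ∫ x, Real.exp (f x) ∂(R) with hZ_def
  have hf_meas : Measurable f := (hCmeas.neg).div_const l
  have hg_meas : Measurable g := (Measure.measurable_rnDeriv Q R).ennreal_toReal
  have hf_bdd : ∀ x, |f x| ≤ M / l := by
    intro x
    rw [hf_def, abs_div, abs_neg, abs_of_pos hl]
    exact div_le_div_of_nonneg_right (hCbdd x) hl.le |>.trans_eq rfl
  -- integrability of exp ∘ f w.r.t. R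
  have hInt_expf : Integrable (fun x => Real.exp (f x)) R := by
    refine Integrable.mono' (integrable_const (Real.exp (M / l)))
      (hf_meas.exp.aestronglyMeasurable) ?_
    filter_upwards with x
    rw [Real.norm_eq_abs, abs_of_pos (Real.exp_pos _)]
    exact Real.exp_le_exp.mpr ((le_abs_self _).trans (hf_bdd x))
  have hZpos : 0 < Z := integral_exp_pos hInt_expf
  -- integrability of C and f w.r.t. Q
  have hIntC : Integrable C Q := by
    refine Integrable.mono' (integrable_const M) hCmeas.aestronglyMeasurable ?_
    filter_upwards with x using (Real.norm_eq_abs _ ▸ hCbdd x)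
  have hIntf : Integrable f Q := (hIntC.neg).div_const l
  -- a.e.-Q positivity and finiteness of rnDeriv
  have hg_pos : ∀ᵐ x ∂Q, 0 < g x := by
    filter_upwards [Measure.rnDeriv_pos hQR, hQR.ae_le (Measure.rnDeriv_lt_top Q R)]
      with x h1 h2
    exact ENNReal.toReal_pos h1.ne' h2.ne
  -- the auxiliary function h = exp f / g
  set h : X → ℝ := fun x => Real.exp (f x) / g x with hh_def
  have hgh_le : ∀ x, g x • h x ≤ Real.exp (f x) := by
    intro x
    rcases eq_or_ne (g x) 0 with h0 | h0
    · simp [hh_def, h0, (Real.exp_pos (f x)).le]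
    · have : g x • h x = Real.exp (f x) := by
        simp only [hh_def, smul_eq_mul]
        field_simp
      rw [this]
  have hgh_nonneg : ∀ x, 0 ≤ g x • h x := by
    intro x
    have hg0 : 0 ≤ g x := ENNReal.toReal_nonneg
    exact smul_nonneg hg0 (div_nonneg (Real.exp_pos _).le hg0)
  have hInt_gh : Integrable (fun x => (Q.rnDeriv R x).toReal • h x) R := by
    refine Integrable.mono' hInt_expf ?_ ?_
    · exact ((hg_meas.smul (hf_meas.exp.div hg_meas))).aestronglyMeasurable
    · filter_upwards with x
      rw [Real.norm_eq_abs, abs_of_nonneg (hgh_nonneg x)]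
      exact hgh_le x
  have hInt_h : Integrable h Q :=
    (integrable_rnDeriv_smul_iff hQR).mp hInt_gh
  -- ∫ h dQ ≤ Z
  have h_int_le : ∫ x, h x ∂Q ≤ Z := by
    rw [← integral_rnDeriv_smul hQR (f := h)]
    exact integral_mono hInt_gh hInt_expf hgh_le
  -- pointwise inequality a.e. Q : f - log g - log Z ≤ h / Z - 1
  have h_ptwise : ∀ᵐ x ∂Q, f x - Real.log (g x) - Real.log Z ≤ h x / Z - 1 := by
    filter_upwards [hg_pos] with x hgx
    have hy : 0 < Real.exp (f x) / (g x * Z) := by positivity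
    have hlog := Real.log_le_sub_one_of_pos hy
    rw [Real.log_div (Real.exp_pos _).ne' (by positivity),
      Real.log_mul hgx.ne' hZpos.ne', Real.log_exp] at hlog
    have : Real.exp (f x) / (g x * Z) = h x / Z := by
      rw [hh_def]; ring
    linarith [this ▸ hlog]
  -- integrate
  have h_int_ineq : ∫ x, (f x - Real.log (g x) - Real.log Z) ∂Q
      ≤ ∫ x, (h x / Z - 1) ∂Q := by
    refine integral_mono_ae ?_ ?_ h_ptwise
    · exact (hIntf.sub hKL).sub (integrable_const _)
    · exact (hInt_h.div_const Z).sub (integrable_const _)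
  have hL : ∫ x, (f x - Real.log (g x) - Real.log Z) ∂Q
      = (∫ x, f x ∂Q) - klDiv Q R - Real.log Z := by
    have h1 := integral_sub (hIntf.sub hKL) (integrable_const (Real.log Z) (μ := Q))
    have h2 := integral_sub hIntf hKL
    simp only [Pi.sub_apply] at h1
    simp only [hg_def]
    rw [h1, h2]
    simp [klDiv]
  have hR : ∫ x, (h x / Z - 1) ∂Q = (∫ x, h x ∂Q) / Z - 1 := by
    rw [integral_sub (hInt_h.div_const Z) (integrable_const _), integral_div]
    simp
  have hRle : (∫ x, h x ∂Q) / Z - 1 ≤ 0 := by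
    have := (div_le_one hZpos).mpr h_int_le
    linarith
  have hkey : (∫ x, f x ∂Q) - klDiv Q R - Real.log Z ≤ 0 := by
    rw [← hL]
    exact h_int_ineq.trans (by rw [hR]; exact hRle)
  have hfint : ∫ x, f x ∂Q = -(∫ x, C x ∂Q) / l := by
    rw [hf_def]
    simp [integral_div, integral_neg, neg_div]
  rw [hfint] at hkey
  set S := ∫ x, C x ∂Q
  set K := klDiv Q R
  have h3 : -S / l ≤ K + Real.log Z := by linarith
  have h4 : -S ≤ l * (K + Real.log Z) := by
    calc -S = l * (-S / l) := by field_simp [mul_comm]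
    _ ≤ l * (K + Real.log Z) := mul_le_mul_of_nonneg_left h3 hl.le
  have h5 : l * (K + Real.log Z) = l * K + l * Real.log Z := by ring
  linarith
end

section
/- Let R be a probability measure on X, C : X → ℝ bounded measurable, λ > 0, and let P* be the tilted measure with density exp(-C/λ)/Z w.r.t. R where Z = ∫ exp(-C/λ) dR. Then for every probability measure Q on X with Q ≪ R and finite KL divergence, ∫ C dQ + λ D(Q‖R) ≥ ∫ C dP* + λ D(P*‖R), with equality if and only if Q = P*. -/
open MeasureTheory Real

lemma gibbs_aux {t : ℝ} (ht : 0 ≤ t) : t - 1 ≤ t * Real.log t := by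
  rcases eq_or_lt_of_le ht with h | h
  · simp [← h]
  · have h1 := Real.add_one_le_exp (-(Real.log t))
    rw [Real.exp_neg, Real.exp_log h] at h1
    have h2 := mul_le_mul_of_nonneg_left h1 ht
    have h3 : t * t⁻¹ = 1 := mul_inv_cancel₀ h.ne'
    nlinarith

lemma gibbs_aux_strict {t : ℝ} (ht : 0 ≤ t) (hne : t ≠ 1) : t - 1 < t * Real.log t := by
  rcases eq_or_lt_of_le ht with h | h
  · rw [← h]; norm_num
  · have hlog : -(Real.log t) ≠ 0 := by
      simp only [ne_eq, neg_eq_zero]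
      intro h0
      rcases Real.log_eq_zero.mp h0 with h' | h' | h' <;> simp_all <;> linarith
    have h1 := Real.add_one_lt_exp hlog
    rw [Real.exp_neg, Real.exp_log h] at h1
    have h2 := mul_lt_mul_of_pos_left h1 h
    have h3 : t * t⁻¹ = 1 := mul_inv_cancel₀ h.ne'
    nlinarith

/-- Gibbs' inequality with equality case. -/
lemma gibbs {X : Type*} [MeasurableSpace X] (Q P : Measure X)
    [IsProbabilityMeasure Q] [IsProbabilityMeasure P]
    (hQP : Q ≪ P) (hint : Integrable (llr Q P) Q) :
    0 ≤ ∫ x, llr Q P x ∂Q ∧ (∫ x, llr Q P x ∂Q = 0 → Q = P) := by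
  set t : X → ℝ := fun x => (Q.rnDeriv P x).toReal with ht
  have hkey : ∫ x, llr Q P x ∂Q = ∫ x, t x * Real.log (t x) ∂P := by
    rw [← integral_rnDeriv_smul hQP (f := llr Q P)]
    simp [llr, smul_eq_mul, ht]
  have hti : Integrable t P := Measure.integrable_toReal_rnDeriv
  have hIt : ∫ x, t x ∂P = 1 := by
    rw [ht]; rw [Measure.integral_toReal_rnDeriv hQP]; simp
  have htlti : Integrable (fun x => t x * Real.log (t x)) P := by
    have := (integrable_rnDeriv_smul_iff hQP (f := llr Q P)).mpr hint
    simpa [llr, smul_eq_mul, ht] using this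
  have hti1 : Integrable (fun x => t x - 1) P := hti.sub (integrable_const 1)
  have hsub : Integrable (fun x => t x * Real.log (t x) - (t x - 1)) P := htlti.sub hti1
  have hnonneg : ∀ x, 0 ≤ t x * Real.log (t x) - (t x - 1) := fun x =>
    sub_nonneg.mpr (gibbs_aux ENNReal.toReal_nonneg)
  have hIsub : ∫ x, (t x * Real.log (t x) - (t x - 1)) ∂P = ∫ x, llr Q P x ∂Q := by
    rw [integral_sub htlti hti1, integral_sub hti (integrable_const 1), hIt, hkey]
    simp
  constructor
  · rw [← hIsub]; exact integral_nonneg hnonneg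
  · intro h0
    have hz : ∫ x, (t x * Real.log (t x) - (t x - 1)) ∂P = 0 := by rw [hIsub, h0]
    have hae : (fun x => t x * Real.log (t x) - (t x - 1)) =ᵐ[P] 0 :=
      (integral_eq_zero_iff_of_nonneg (fun x => hnonneg x) hsub).mp hz
    have h1 : Q.rnDeriv P =ᵐ[P] 1 := by
      filter_upwards [hae] with x hx
      by_contra hne
      simp only [Pi.one_apply] at hne
      have htne : t x ≠ 1 := by
        intro h
        exact hne (ENNReal.toReal_eq_one_iff _ |>.mp h)
      have hs := gibbs_aux_strict (ENNReal.toReal_nonneg (a := Q.rnDeriv P x)) htne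
      simp only [ht, Pi.zero_apply] at hx
      linarith
    calc Q = P.withDensity (Q.rnDeriv P) := (Measure.withDensity_rnDeriv_eq Q P hQP).symm
    _ = P.withDensity 1 := withDensity_congr_ae h1
    _ = P := by simp

/-- The tilted measure is the unique minimizer of cost plus KL divergence. -/
theorem tilted_measure_unique_minimizer {X : Type*} [MeasurableSpace X]
    (R : Measure X) [IsProbabilityMeasure R]
    (C : X → ℝ) (hCmeas : Measurable C) (M : ℝ) (hCbdd : ∀ x, |C x| ≤ M)
    (l : ℝ) (hl : 0 < l)
    (Z : ℝ) (hZ : Z = ∫ x, Real.exp (-C x / l) ∂ R)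
    (Pstar : Measure X)
    (hP : Pstar = R.withDensity (fun x => ENNReal.ofReal (Real.exp (-C x / l) / Z)))
    (Q : Measure X) [IsProbabilityMeasure Q] (hQR : Q ≪ R)
    (hKL : Integrable (fun x => Real.log ((Q.rnDeriv R x).toReal)) Q) :
    (∫ x, C x ∂Pstar) + l * klDiv Pstar R ≤ (∫ x, C x ∂Q) + l * klDiv Q R ∧
      ((∫ x, C x ∂Q) + l * klDiv Q R = (∫ x, C x ∂Pstar) + l * klDiv Pstar R ↔ Q = Pstar) := by
  have hl0 : l ≠ 0 := hl.ne'
  set f : X → ℝ := fun x => -C x / l with hf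
  have hfm : Measurable fun x => Real.exp (f x) := (hCmeas.neg.div_const l).exp
  have hfb : ∀ x, ‖Real.exp (f x)‖ ≤ Real.exp (M / l) := by
    intro x
    rw [Real.norm_eq_abs, abs_of_pos (Real.exp_pos _), Real.exp_le_exp]
    have h1 : -C x ≤ M := by have := abs_le.mp (hCbdd x); linarith
    exact div_le_div_of_nonneg_right h1 hl.le
  have hfi : Integrable (fun x => Real.exp (f x)) R :=
    (integrable_const (Real.exp (M / l))).mono' hfm.aestronglyMeasurable (ae_of_all _ hfb)
  have hPt : Pstar = R.tilted f := by
    rw [hP, hZ]; rfl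
  have hZpos : 0 < Z := by rw [hZ]; exact integral_exp_pos hfi
  haveI hPprob : IsProbabilityMeasure Pstar := hPt ▸ isProbabilityMeasure_tilted hfi
  have hRP : R ≪ Pstar := hPt ▸ absolutelyContinuous_tilted hfi
  have hQP : Q ≪ Pstar := hQR.trans hRP
  have hPR : Pstar ≪ R := hPt ▸ tilted_absolutelyContinuous R f
  have hCint : ∀ (μ : Measure X) [IsProbabilityMeasure μ], Integrable C μ := by
    intro μ _
    refine (integrable_const M).mono' hCmeas.aestronglyMeasurable (ae_of_all _ ?_)
    intro x; rw [Real.norm_eq_abs]; exact hCbdd x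
  have hCf : ∀ (μ : Measure X) [IsProbabilityMeasure μ], Integrable f μ := by
    intro μ _
    exact ((hCint μ).neg).div_const l
  have hfint : ∀ (μ : Measure X) [IsProbabilityMeasure μ],
      ∫ x, f x ∂μ = -((∫ x, C x ∂μ) / l) := by
    intro μ _
    have h : ∫ x, f x ∂μ = ∫ x, -(C x / l) ∂μ := by
      apply integral_congr_ae
      filter_upwards with x
      rw [hf]; ring
    rw [h, integral_neg, integral_div]
  have hKL' : Integrable (llr Q R) Q := hKL
  -- value at Pstar
  have hllrP : llr Pstar R =ᵐ[Pstar] fun x => f x - Real.log Z := by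
    rw [hPt]
    have h := log_rnDeriv_tilted_left_self (μ := R) (f := f) hfi
    rw [hPt] at hPR
    filter_upwards [hPR.ae_le h] with x hx
    rw [llr, hx, ← hZ]
  have hklP : klDiv Pstar R = ∫ x, f x ∂Pstar - Real.log Z := by
    have : klDiv Pstar R = ∫ x, llr Pstar R x ∂Pstar := rfl
    rw [this, integral_congr_ae hllrP,
      integral_sub (hCf Pstar) (integrable_const _), integral_const]
    simp
  have hAP : (∫ x, C x ∂Pstar) + l * klDiv Pstar R = -(l * Real.log Z) := by
    rw [hklP, hfint Pstar]
    field_simp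
    ring
  -- value at Q
  have hDQ : ∫ x, llr Q Pstar x ∂Q = klDiv Q R - ∫ x, f x ∂Q + Real.log Z := by
    rw [hPt]
    rw [integral_llr_tilted_right hQR (hCf Q) hfi hKL', ← hZ]
    rfl
  have hAQ : (∫ x, C x ∂Q) + l * klDiv Q R
      = l * (∫ x, llr Q Pstar x ∂Q) - l * Real.log Z := by
    rw [hDQ, hfint Q]
    field_simp
    ring
  have hint2 : Integrable (llr Q Pstar) Q := by
    rw [hPt]; exact integrable_llr_tilted_right hQR (hCf Q) hKL' hfi
  obtain ⟨hge, heq⟩ := gibbs Q Pstar hQP hint2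
  constructor
  · rw [hAQ, hAP]; nlinarith
  · constructor
    · intro h
      apply heq
      have h2 : l * (∫ x, llr Q Pstar x ∂Q) = 0 := by
        rw [hAQ, hAP] at h; linarith
      rcases mul_eq_zero.mp h2 with h3 | h3
      · exact absurd h3 hl0
      · exact h3
    · intro h; rw [h]
end

section
/- (Bretagnolle–Huber inequality) For probability measures Q and R on a measurable space and any measurable event E, Pr_R(E) + Pr_Q(Eᶜ) ≥ (1/2) exp(-D(Q‖R)), where D(Q‖R) is the KL divergence. -/
open MeasureTheory Real

lemma bh_aux {Ω : Type*} [MeasurableSpace Ω]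
    (Q R : Measure Ω) [IsProbabilityMeasure Q] [IsProbabilityMeasure R]
    (hQR : Q ≪ R)
    (hKL : Integrable (fun x => Real.log ((Q.rnDeriv R x).toReal)) Q)
    (S : Set Ω) (hS : MeasurableSet S) (hq0 : Q S ≠ 0) :
    ∫ x in S, -Real.log ((Q.rnDeriv R x).toReal) ∂Q ≤
      (Q S).toReal * Real.log ((R S).toReal / (Q S).toReal) := by
  set f : Ω → ℝ := fun x => (Q.rnDeriv R x).toReal with hf
  have hf_meas : Measurable f := (Measure.measurable_rnDeriv Q R).ennreal_toReal
  have hfpos : ∀ᵐ x ∂Q, 0 < f x := by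
    filter_upwards [Measure.rnDeriv_pos hQR,
      hQR.ae_le (Measure.rnDeriv_lt_top Q R)] with x h1 h2
    exact ENNReal.toReal_pos h1.ne' h2.ne
  have hq : 0 < (Q S).toReal := ENNReal.toReal_pos hq0 (measure_ne_top Q S)
  have hRS0 : R S ≠ 0 := fun h => hq0 (hQR h)
  have hRS : 0 < (R S).toReal := ENNReal.toReal_pos hRS0 (measure_ne_top R S)
  set q : ℝ := (Q S).toReal with hqdef
  set c : ℝ := (R S).toReal / q with hcdef
  have hc : 0 < c := div_pos hRS hq
  -- integrability of 1/f wrt Q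
  have hmul_meas : Measurable fun x => f x • (1 / f x) := hf_meas.smul (hf_meas.const_div 1)
  have hmul_bd : ∀ x, 0 ≤ f x • (1 / f x) ∧ f x • (1 / f x) ≤ 1 := by
    intro x
    rcases eq_or_ne (f x) 0 with h | h
    · simp [h]
    · have h1 : f x • (1 / f x) = 1 := by
        rw [smul_eq_mul, mul_one_div, div_self h]
      rw [h1]; norm_num
  have hmulR : Integrable (fun x => f x • (1 / f x)) R := by
    refine (integrable_const (1 : ℝ)).mono' hmul_meas.aestronglyMeasurable ?_
    filter_upwards with x
    rw [Real.norm_eq_abs, abs_le]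
    exact ⟨by linarith [(hmul_bd x).1], by simpa using (hmul_bd x).2⟩
  have hginv : Integrable (fun x => 1 / f x) Q := by
    rw [← integrable_rnDeriv_smul_iff hQR]
    exact hmulR
  -- ∫_S 1/f dQ ≤ R S
  have hm : ∫ x in S, 1 / f x ∂Q ≤ (R S).toReal := by
    rw [← setIntegral_rnDeriv_smul hQR hS]
    calc ∫ x in S, f x • (1 / f x) ∂ R ≤ ∫ x in S, (1 : ℝ) ∂ R := by
          refine setIntegral_mono hmulR.restrict (integrable_const 1) ?_
          intro x; exact (hmul_bd x).2
      _ = (R S).toReal := by simp [Measure.real]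
  -- pointwise tangent bound
  have hpt : ∀ᵐ x ∂Q, -Real.log (f x) ≤ (1 / f x) / c + (Real.log c - 1) := by
    filter_upwards [hfpos] with x hx
    have h1 : (0:ℝ) < 1 / f x := by positivity
    have h2 : (0:ℝ) < (1 / f x) / c := div_pos h1 hc
    have hlog : Real.log (1 / f x) = Real.log ((1 / f x) / c) + Real.log c := by
      rw [← Real.log_mul h2.ne' hc.ne', div_mul_cancel₀ _ hc.ne']
    have h3 : Real.log ((1 / f x) / c) ≤ (1 / f x) / c - 1 :=
      Real.log_le_sub_one_of_pos h2
    have : -Real.log (f x) = Real.log (1 / f x) := by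
      rw [one_div, Real.log_inv]
    linarith [hlog, h3, this.ge, this.le]
  -- integrate
  have hint1 : Integrable (fun x => -Real.log (f x)) (Q.restrict S) := hKL.neg.restrict
  have hint2 : Integrable (fun x => (1 / f x) / c + (Real.log c - 1)) (Q.restrict S) :=
    ((hginv.restrict (s := S)).div_const c).add (integrable_const _)
  have hle := integral_mono_ae hint1 hint2 (ae_restrict_of_ae hpt)
  have hcomp : ∫ x in S, ((1 / f x) / c + (Real.log c - 1)) ∂Q
      = (∫ x in S, 1 / f x ∂Q) / c + q * (Real.log c - 1) := by
    rw [integral_add ((hginv.restrict (s := S)).div_const c) (integrable_const _),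
      integral_div, setIntegral_const, smul_eq_mul]; rfl
  have hfinal : (∫ x in S, 1 / f x ∂Q) / c + q * (Real.log c - 1) ≤ q * Real.log c := by
    have h4 : (∫ x in S, 1 / f x ∂Q) / c ≤ (R S).toReal / c := by gcongr
    have h5 : (R S).toReal / c = q := by
      rw [hcdef]; field_simp
    nlinarith [h4, h5]
  calc ∫ x in S, -Real.log (f x) ∂Q ≤ _ := hle
    _ = (∫ x in S, 1 / f x ∂Q) / c + q * (Real.log c - 1) := hcomp
    _ ≤ q * Real.log c := hfinal

/-- Bretagnolle–Huber inequality. -/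
theorem bretagnolle_huber {Ω : Type*} [MeasurableSpace Ω]
    (Q R : Measure Ω) [IsProbabilityMeasure Q] [IsProbabilityMeasure R]
    (hQR : Q ≪ R)
    (hKL : Integrable (fun x => Real.log ((Q.rnDeriv R x).toReal)) Q)
    (E : Set Ω) (hE : MeasurableSet E) :
    (1 / 2) * Real.exp (-(klDiv Q R)) ≤ (R E).toReal + (Q Eᶜ).toReal := by
  have hIneg : Integrable (fun x => -Real.log ((Q.rnDeriv R x).toReal)) Q := hKL.neg
  have hsum : -klDiv Q R = ∫ x, -Real.log ((Q.rnDeriv R x).toReal) ∂Q := by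
    rw [klDiv, ← integral_neg]
  have hD0 : -klDiv Q R ≤ 0 := by
    have h := bh_aux Q R hQR hKL Set.univ MeasurableSet.univ (by simp)
    rw [setIntegral_univ] at h
    rw [hsum]
    refine h.trans ?_
    simp
  rcases eq_or_ne (Q E) 0 with hqe | hqe
  · have h1 : (Q Eᶜ).toReal = 1 := by
      rw [measure_compl hE (measure_ne_top _ _), hqe]; simp
    have hexp1 : Real.exp (-klDiv Q R) ≤ 1 := by
      rw [← Real.exp_zero]; exact Real.exp_le_exp.mpr hD0
    have ha : 0 ≤ (R E).toReal := ENNReal.toReal_nonneg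
    rw [h1]; linarith
  rcases eq_or_ne (Q Eᶜ) 0 with hqc | hqc
  · have hQE1 : (Q E).toReal = 1 := by
      rw [prob_compl_eq_zero_iff hE] at hqc; rw [hqc]; simp
    have ha : 0 < (R E).toReal :=
      ENNReal.toReal_pos (fun h => hqe (hQR h)) (measure_ne_top _ _)
    have h := bh_aux Q R hQR hKL E hE hqe
    rw [hQE1] at h
    simp only [one_mul, div_one] at h
    have hsplit : ∫ x, -Real.log ((Q.rnDeriv R x).toReal) ∂Q
        = ∫ x in E, -Real.log ((Q.rnDeriv R x).toReal) ∂Q := by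
      rw [← integral_add_compl hE hIneg, setIntegral_measure_zero _ hqc, add_zero]
    have hDle : -klDiv Q R ≤ Real.log (R E).toReal := by
      rw [hsum, hsplit]; exact h
    have hexp : Real.exp (-klDiv Q R) ≤ (R E).toReal := by
      calc Real.exp (-klDiv Q R) ≤ Real.exp (Real.log (R E).toReal) :=
            Real.exp_le_exp.mpr hDle
        _ = (R E).toReal := Real.exp_log ha
    have hb : 0 ≤ (Q Eᶜ).toReal := ENNReal.toReal_nonneg
    nlinarith [Real.exp_pos (-klDiv Q R)]
  · set a := (R E).toReal with hadef
    set q := (Q E).toReal with hqdef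
    set b := (R Eᶜ).toReal with hbdef
    have hq : 0 < q := ENNReal.toReal_pos hqe (measure_ne_top _ _)
    have hqc' : 0 < (Q Eᶜ).toReal := ENNReal.toReal_pos hqc (measure_ne_top _ _)
    have hcompl : (Q Eᶜ).toReal = 1 - q := by
      rw [measure_compl hE (measure_ne_top _ _), measure_univ,
        ENNReal.toReal_sub_of_le prob_le_one (by simp)]
      simp [hqdef]
    have h1q : (0:ℝ) < 1 - q := by rw [← hcompl]; exact hqc'
    have hq1 : q < 1 := by linarith
    have ha : 0 < a := ENNReal.toReal_pos (fun h => hqe (hQR h)) (measure_ne_top _ _)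
    have hb : 0 < b := ENNReal.toReal_pos (fun h => hqc (hQR h)) (measure_ne_top _ _)
    have hb1 : b ≤ 1 := by
      calc b ≤ (R Set.univ).toReal :=
            ENNReal.toReal_mono (measure_ne_top _ _) (measure_mono (Set.subset_univ _))
        _ = 1 := by simp
    have h1 := bh_aux Q R hQR hKL E hE hqe
    have h2 := bh_aux Q R hQR hKL Eᶜ hE.compl hqc
    rw [hcompl] at h2
    have hsplit : -klDiv Q R ≤ q * Real.log (a / q) + (1 - q) * Real.log (b / (1 - q)) := by
      rw [hsum, ← integral_add_compl hE hIneg]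
      exact add_le_add h1 h2
    have hexp : Real.exp (-klDiv Q R) ≤ (a / q) ^ q * (b / (1 - q)) ^ (1 - q) := by
      calc Real.exp (-klDiv Q R)
          ≤ Real.exp (q * Real.log (a / q) + (1 - q) * Real.log (b / (1 - q))) :=
            Real.exp_le_exp.mpr hsplit
        _ = (a / q) ^ q * (b / (1 - q)) ^ (1 - q) := by
            rw [Real.exp_add, Real.rpow_def_of_pos (div_pos ha hq),
              Real.rpow_def_of_pos (div_pos hb h1q), mul_comm (Real.log (a / q)),
              mul_comm (Real.log (b / (1 - q)))]
    have step1 : (a / q) ^ q * (b / (1 - q)) ^ (1 - q)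
        ≤ (a / q) ^ q * (1 / (1 - q)) ^ (1 - q) := by
      apply mul_le_mul_of_nonneg_left _ (Real.rpow_nonneg (div_pos ha hq).le _)
      exact Real.rpow_le_rpow (by positivity) (by gcongr) h1q.le
    have step2 : (a / q) ^ q * (1 / (1 - q)) ^ (1 - q)
        = a ^ q * ((1 / q) ^ q * (1 / (1 - q)) ^ (1 - q)) := by
      rw [div_eq_mul_one_div a q, Real.mul_rpow ha.le (by positivity), mul_assoc]
    have hamgm1 : (1 / q) ^ q * (1 / (1 - q)) ^ (1 - q)
        ≤ q * (1 / q) + (1 - q) * (1 / (1 - q)) :=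
      Real.geom_mean_le_arith_mean2_weighted hq.le h1q.le (by positivity) (by positivity)
        (by ring)
    have hamgm1' : (1 / q) ^ q * (1 / (1 - q)) ^ (1 - q) ≤ 2 := by
      refine hamgm1.trans_eq ?_
      field_simp
      norm_num
    have hamgm2 : a ^ q * (1:ℝ) ^ (1 - q) ≤ q * a + (1 - q) * 1 :=
      Real.geom_mean_le_arith_mean2_weighted hq.le h1q.le ha.le zero_le_one (by ring)
    have hamgm2' : a ^ q ≤ q * a + (1 - q) := by
      simpa using hamgm2
    have hfin : Real.exp (-klDiv Q R) ≤ 2 * (a + (1 - q)) := by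
      have h3 : a ^ q * ((1 / q) ^ q * (1 / (1 - q)) ^ (1 - q)) ≤ a ^ q * 2 :=
        mul_le_mul_of_nonneg_left hamgm1' (Real.rpow_nonneg ha.le _)
      nlinarith [hexp, step1, step2, hamgm2', Real.rpow_nonneg ha.le q]
    rw [hcompl]
    linarith
end
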